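/- If S is a precompact subsemigroup of a Hausdorff topological group G that is closed in G, then S is a subgroup of G. -/

import Mathlib

open Pointwise

/-- A subset `A` of a topological group `G` is precompact if for every neighborhood `V`
of the identity there is a finite set `K` with `A ⊆ K*V` and `A ⊆ V*K`. -/
def IsPrecompactIn {G : Type*} [Group G] [TopologicalSpace G] (A : Set G) : Prop :=
  ∀ V ∈ nhds (1 : G), ∃ K : Finset G, A ⊆ (K : Set G) * V ∧ A ⊆ V * (K : Set G)

/-- A space is pseudocompact if it is Tychonoff (completely regular Hausdorff/T1)
and every continuous real-valued function on it is bounded. -/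
def IsPseudocompact (X : Type*) [TopologicalSpace X] : Prop :=
  CompletelyRegularSpace X ∧ T1Space X ∧
    ∀ f : X → ℝ, Continuous f → ∃ M : ℝ, ∀ x, |f x| ≤ M

private lemma pow_mem_semigroup {G : Type*} [Group G] {S : Set G} (hmul : S * S ⊆ S)
    {s : G} (hs : s ∈ S) : ∀ n : ℕ, s ^ (n + 1) ∈ S := by
  intro n
  induction n with
  | zero => simpa using hs
  | succ n ih =>
    have : s ^ (n + 1) * s ∈ S := hmul (Set.mul_mem_mul ih hs)
    simpa [pow_succ] using this

/-- Key lemma: powers of an element return near the identity. -/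
private lemma exists_pow_mem {G : Type*} [Group G] [TopologicalSpace G] [IsTopologicalGroup G]
    {S : Set G} (hmul : S * S ⊆ S) (hpre : IsPrecompactIn S) {s : G} (hs : s ∈ S)
    {V : Set G} (hV : V ∈ nhds (1 : G)) : ∃ n : ℕ, 2 ≤ n ∧ s ^ n ∈ V := by
  obtain ⟨W, hW, hWV⟩ := exists_nhds_split_inv hV
  -- use W⁻¹ : for a b ∈ W⁻¹, a⁻¹ * b ∈ V
  obtain ⟨K, hK, -⟩ := hpre _ (inv_mem_nhds_one G hW)
  -- pigeonhole on powers of s^2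
  have hmem : ∀ n : ℕ, ∃ k ∈ K, ∃ w ∈ W⁻¹, (s ^ 2) ^ (n + 1) = k * w := by
    intro n
    have : (s ^ 2) ^ (n + 1) ∈ S := by
      have := pow_mem_semigroup hmul hs (2 * (n + 1) - 1)
      simpa [← pow_mul, Nat.sub_add_cancel (by omega : 1 ≤ 2 * (n + 1))] using this
    obtain ⟨k, hk, w, hw, hkw⟩ := hK this
    exact ⟨k, hk, w, hw, hkw.symm⟩
  choose k hkK w hwW hEq using hmem
  obtain ⟨m, n, hmn, heq⟩ := Finite.exists_ne_map_eq_of_infinite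
    (fun i : ℕ => (⟨k i, hkK i⟩ : {x // x ∈ K}))
  have hkeq : k m = k n := congrArg Subtype.val heq
  -- wlog m < n
  rcases hmn.lt_or_gt with h | h
  · refine ⟨2 * (n - m), by omega, ?_⟩
    have hcalc : s ^ (2 * (n - m)) = (w m)⁻¹ * w n := by
      have h1 := hEq m
      have h2 := hEq n
      have : (s ^ 2) ^ (n + 1) = (s ^ 2) ^ (m + 1) * (s ^ 2) ^ (n - m) := by
        rw [← pow_add]; congr 1; omega
      rw [h1, h2, hkeq] at this
      have : w n = w m * (s ^ 2) ^ (n - m) := by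
        have := mul_left_cancel ((mul_assoc _ _ _).symm.trans this.symm)
        exact this.symm
      rw [this, ← pow_mul]
      group
    rw [hcalc]
    have h1 : (w m)⁻¹ ∈ W := Set.inv_mem_inv.mp (by simpa using hwW m)
    have h2 : (w n)⁻¹ ∈ W := Set.inv_mem_inv.mp (by simpa using hwW n)
    simpa [div_eq_mul_inv] using hWV _ h1 _ h2
  · refine ⟨2 * (m - n), by omega, ?_⟩
    have hcalc : s ^ (2 * (m - n)) = (w n)⁻¹ * w m := by
      have h1 := hEq m
      have h2 := hEq n
      have : (s ^ 2) ^ (m + 1) = (s ^ 2) ^ (n + 1) * (s ^ 2) ^ (m - n) := by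
        rw [← pow_add]; congr 1; omega
      rw [h1, h2, hkeq] at this
      have : w m = w n * (s ^ 2) ^ (m - n) := by
        have := mul_left_cancel ((mul_assoc _ _ _).symm.trans this.symm)
        exact this.symm
      rw [this, ← pow_mul]
      group
    rw [hcalc]
    have h1 : (w n)⁻¹ ∈ W := Set.inv_mem_inv.mp (by simpa using hwW n)
    have h2 : (w m)⁻¹ ∈ W := Set.inv_mem_inv.mp (by simpa using hwW m)
    simpa [div_eq_mul_inv] using hWV _ h1 _ h2

/-- A closed precompact subsemigroup of a Hausdorff topological group is a subgroup. -/
theorem stmt3 {G : Type*} [Group G] [TopologicalSpace G] [IsTopologicalGroup G] [T2Space G]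
    (S : Set G) (hne : S.Nonempty) (hmul : S * S ⊆ S) (hpre : IsPrecompactIn S)
    (hcl : IsClosed S) : ∃ H : Subgroup G, (H : Set G) = S := by
  have hinv : ∀ s ∈ S, s⁻¹ ∈ S := by
    intro s hs
    have hc : s⁻¹ ∈ closure S := by
      rw [mem_closure_iff_nhds]
      intro U hU
      have hV : {x : G | s⁻¹ * x ∈ U} ∈ nhds (1 : G) := by
        have hcont : ContinuousAt (fun x : G => s⁻¹ * x) 1 := (continuous_mul_left s⁻¹).continuousAt
        have : (fun x : G => s⁻¹ * x) 1 = s⁻¹ := by simp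
        exact hcont (by rwa [this])
      obtain ⟨n, hn2, hnV⟩ := exists_pow_mem hmul hpre hs hV
      refine ⟨s ^ (n - 1), ?_, ?_⟩
      · have : s⁻¹ * s ^ n ∈ U := hnV
        have heq : s⁻¹ * s ^ n = s ^ (n - 1) := by
          have : s ^ n = s * s ^ (n - 1) := by
            rw [← pow_succ']; congr 1; omega
          rw [this]; group
        rwa [heq] at this
      · have := pow_mem_semigroup hmul hs (n - 2)
        have heq : n - 2 + 1 = n - 1 := by omega
        rwa [heq] at this
    rwa [hcl.closure_eq] at hc
  obtain ⟨s, hs⟩ := hne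
  have hone : (1 : G) ∈ S := by
    have := hmul (Set.mul_mem_mul hs (hinv s hs))
    simpa using this
  exact ⟨{ carrier := S,
           one_mem' := hone,
           mul_mem' := fun ha hb => hmul (Set.mul_mem_mul ha hb),
           inv_mem' := fun ha => hinv _ ha }, rfl⟩
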